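/- arXiv:1705.02232 — 2 statements merged into one kernel-verified Lean document; each statement's English description precedes it below -/
import Mathlib

section
/- Let X be a set with a symmetric dissimilarity d with d(y,y)=0, and define ss(Y) := (1/(2|Y|)) ∑_{y∈Y} ∑_{z∈Y} d²(y,z) and D(Y,Z) := ∑_{y∈Y} ∑_{z∈Z} d²(y,z) for finite Y, Z ⊆ X. Then for a finite Y with |Y| ≥ 2 and x ∈ Y: ss(Y \ {x}) = (|Y|/(|Y|−1)) · ss(Y) − (1/(|Y|−1)) · D({x}, Y). -/
open Finset

theorem Finset.sum_sum_erase_erase_of_symm {α M : Type*} [DecidableEq α] [AddCommGroup M]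
    (f : α → α → M) (hf : ∀ y z, f y z = f z y) {s : Finset α} {x : α} (hx : x ∈ s) :
    ∑ y ∈ s.erase x, ∑ z ∈ s.erase x, f y z =
      ∑ y ∈ s, ∑ z ∈ s, f y z - 2 • ∑ z ∈ s, f x z + f x x := by
  have row (y : α) : ∑ z ∈ s, f y z = f y x + ∑ z ∈ s.erase x, f y z :=
    (add_sum_erase s _ hx).symm
  have column : ∑ y ∈ s.erase x, f y x = ∑ z ∈ s, f x z - f x x := by
    rw [row x, add_sub_cancel_left]
    exact sum_congr rfl fun y _ ↦ hf y x
  rw [← add_sum_erase s _ hx, row x]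
  simp only [row, sum_add_distrib, column]
  abel

theorem ss_erase_general (X : Type*) [DecidableEq X] (d : X → X → ℝ)
    (hd_diag : ∀ y, d y y = 0)
    (hd_symm : ∀ y z, d y z = d z y)
    (Y : Finset X) (hY : 2 ≤ Y.card) (x : X) (hx : x ∈ Y)
    (ss : Finset X → ℝ)
    (hss : ∀ Z : Finset X, ss Z = (1 / (2 * (Z.card : ℝ))) * ∑ y ∈ Z, ∑ z ∈ Z, d y z ^ 2)
    (D : Finset X → Finset X → ℝ)
    (hD : ∀ Z₁ Z₂ : Finset X, D Z₁ Z₂ = ∑ y ∈ Z₁, ∑ z ∈ Z₂, d y z ^ 2) :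
    ss (Y.erase x) =
      ((Y.card : ℝ) / ((Y.card : ℝ) - 1)) * ss Y -
        (1 / ((Y.card : ℝ) - 1)) * D {x} Y := by
  have hcard : ((Y.erase x).card : ℝ) = Y.card - 1 := by
    rw [card_erase_of_mem hx, Nat.cast_pred (card_pos.mpr ⟨x, hx⟩)]
  have hpos : (1 : ℝ) < Y.card := by exact_mod_cast hY
  rw [hss, hss, hD, sum_singleton, hcard,
    sum_sum_erase_erase_of_symm _ (fun y z ↦ by rw [hd_symm]) hx, hd_diag]
  field_simp [sub_ne_zero.mpr hpos.ne']
  ring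

theorem ss_erase (X : Type*) [DecidableEq X] (d : X → X → ℝ)
    (hd_nonneg : ∀ y z, 0 ≤ d y z)
    (hd_diag : ∀ y, d y y = 0)
    (hd_symm : ∀ y z, d y z = d z y)
    (Y : Finset X) (hY : 2 ≤ Y.card) (x : X) (hx : x ∈ Y)
    (ss : Finset X → ℝ)
    (hss : ∀ Z : Finset X, ss Z = (1 / (2 * (Z.card : ℝ))) * ∑ y ∈ Z, ∑ z ∈ Z, d y z ^ 2)
    (D : Finset X → Finset X → ℝ)
    (hD : ∀ Z₁ Z₂ : Finset X, D Z₁ Z₂ = ∑ y ∈ Z₁, ∑ z ∈ Z₂, d y z ^ 2) :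
    ss (Y.erase x) =
      ((Y.card : ℝ) / ((Y.card : ℝ) - 1)) * ss Y -
        (1 / ((Y.card : ℝ) - 1)) * D {x} Y :=
  ss_erase_general X d hd_diag hd_symm Y hY x hx ss hss D hD
end

section
/- Scale equivariance of the generalized sum of squares: if d is a symmetric dissimilarity on X and λ > 0, then for the scaled dissimilarity d_λ(x,y) := λ·d(x,y), the generalized within-cluster sum of squares satisfies ss_{d_λ}(Y) = λ²·ss_d(Y) for every finite nonempty Y ⊆ X. Consequently, for two partitions {Y_i} and {Z_j} of a finite set X with all clusters having positive ss, the sWards criterion satisfies E_SW^{d_λ}(Y_1,…,Y_k) − E_SW^{d_λ}(Z_1,…,Z_m) = E_SW^{d}(Y_1,…,Y_k) − E_SW^{d}(Z_1,…,Z_m); i.e., the ordering of partitions by the sWards criterion is invariant under scaling of the dissimilarity. -/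
noncomputable def ssd {X : Type*} (d : X → X → ℝ) (Y : Finset X) : ℝ :=
  (1 / (2 * (Y.card : ℝ))) * ∑ y ∈ Y, ∑ z ∈ Y, d y z ^ 2

noncomputable def ESW {X : Type*} [Fintype X] (d : X → X → ℝ) {k : ℕ}
    (Y : Fin k → Finset X) (N : ℝ) : ℝ :=
  (N / 2) * Real.log (2 * Real.pi * Real.exp 1 / N) +
    ∑ i, (((Y i).card : ℝ) / (Fintype.card X : ℝ)) *
      ((N / 2) * Real.log (ssd d (Y i)) -
        ((N + 2) / 2) * Real.log (((Y i).card : ℝ) / (Fintype.card X : ℝ)))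

/-! Scaling `d` by `lam` multiplies every `ssd` by `lam ^ 2`, so each cluster term of `ESW` gains
`(|Yᵢ| / |X|) (N / 2) log (lam ^ 2)`. The cluster weights `|Yᵢ| / |X|` of any partition sum to the
same number, so the shift is the same for every partition and cancels in differences. -/

lemma ssd_const_mul {X : Type*} (d : X → X → ℝ) (lam : ℝ) (W : Finset X) :
    ssd (fun u v => lam * d u v) W = lam ^ 2 * ssd d W := by
  simp only [ssd, mul_pow, ← Finset.mul_sum]
  ring

lemma ESW_const_mul {X : Type*} [Fintype X] (d : X → X → ℝ) {lam : ℝ} (hlam : lam ≠ 0)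
    (N : ℝ) {k : ℕ} (Y : Fin k → Finset X) (hY : ∀ i, ssd d (Y i) ≠ 0) :
    ESW (fun u v => lam * d u v) Y N =
      ESW d Y N + ((∑ i, (Y i).card : ℕ) : ℝ) / Fintype.card X * (N / 2 * Real.log (lam ^ 2)) := by
  have hlog : ∀ i, Real.log (ssd (fun u v => lam * d u v) (Y i)) =
      Real.log (ssd d (Y i)) + Real.log (lam ^ 2) := fun i => by
    rw [ssd_const_mul, Real.log_mul (pow_ne_zero 2 hlam) (hY i), add_comm]
  rw [ESW, ESW, add_assoc, Nat.cast_sum, Finset.sum_div, Finset.sum_mul, ← Finset.sum_add_distrib]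
  congr 1
  refine Finset.sum_congr rfl fun i _ => ?_
  rw [hlog]
  ring

lemma Finset.sum_card_eq_card_of_partition {X : Type*} [Fintype X] [DecidableEq X] {k : ℕ}
    {Y : Fin k → Finset X} (hdisj : ∀ i j, i ≠ j → Disjoint (Y i) (Y j))
    (hcover : Finset.univ.biUnion Y = Finset.univ) :
    ∑ i, (Y i).card = Fintype.card X := by
  rw [← Finset.card_biUnion fun i _ j _ h => hdisj i j h, hcover, Finset.card_univ]

theorem sWards_scale_invariance_general (X : Type*) [Fintype X] [DecidableEq X]
    (d : X → X → ℝ)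
    (lam : ℝ) (hlam : 0 < lam)
    (N : ℝ)
    (k m : ℕ) (Y : Fin k → Finset X) (Z : Fin m → Finset X)
    (hYdisj : ∀ i j, i ≠ j → Disjoint (Y i) (Y j))
    (hYcover : Finset.univ.biUnion Y = (Finset.univ : Finset X))
    (hZdisj : ∀ i j, i ≠ j → Disjoint (Z i) (Z j))
    (hZcover : Finset.univ.biUnion Z = (Finset.univ : Finset X))
    (hssY : ∀ i, 0 < ssd d (Y i)) (hssZ : ∀ i, 0 < ssd d (Z i)) :
    (∀ W : Finset X, W.Nonempty →
        ssd (fun u v => lam * d u v) W = lam ^ 2 * ssd d W) ∧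
    ESW (fun u v => lam * d u v) Y N - ESW (fun u v => lam * d u v) Z N =
      ESW d Y N - ESW d Z N := by
  refine ⟨fun W _ => ssd_const_mul d lam W, ?_⟩
  rw [ESW_const_mul d hlam.ne' N Y fun i => (hssY i).ne',
    ESW_const_mul d hlam.ne' N Z fun i => (hssZ i).ne',
    Finset.sum_card_eq_card_of_partition hYdisj hYcover,
    Finset.sum_card_eq_card_of_partition hZdisj hZcover]
  ring

theorem sWards_scale_invariance (X : Type*) [Fintype X] [DecidableEq X]
    (d : X → X → ℝ)
    (hd_nonneg : ∀ y z, 0 ≤ d y z)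
    (hd_diag : ∀ y, d y y = 0)
    (hd_symm : ∀ y z, d y z = d z y)
    (lam : ℝ) (hlam : 0 < lam)
    (N : ℝ) (hN : 0 < N)
    (hX : 0 < Fintype.card X)
    (k m : ℕ) (Y : Fin k → Finset X) (Z : Fin m → Finset X)
    (hYdisj : ∀ i j, i ≠ j → Disjoint (Y i) (Y j))
    (hYcover : Finset.univ.biUnion Y = (Finset.univ : Finset X))
    (hZdisj : ∀ i j, i ≠ j → Disjoint (Z i) (Z j))
    (hZcover : Finset.univ.biUnion Z = (Finset.univ : Finset X))
    (hYne : ∀ i, (Y i).Nonempty) (hZne : ∀ i, (Z i).Nonempty)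
    (hssY : ∀ i, 0 < ssd d (Y i)) (hssZ : ∀ i, 0 < ssd d (Z i)) :
    (∀ W : Finset X, W.Nonempty →
        ssd (fun u v => lam * d u v) W = lam ^ 2 * ssd d W) ∧
    ESW (fun u v => lam * d u v) Y N - ESW (fun u v => lam * d u v) Z N =
      ESW d Y N - ESW d Z N :=
  sWards_scale_invariance_general X d lam hlam N k m Y Z hYdisj hYcover hZdisj hZcover hssY hssZ
end
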